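/- For every n ≥ 1 and all natural numbers a and b (viewed as finite ordinals), the ordinal operation ⟨a,b⟩_n equals the hyperoperation [a,b]_n. -/

import Mathlib

/-- Goodstein's hyperoperations `[a, b]ₙ` (`n ≥ 1`; the value at `n = 0` is junk). -/
def hyp : ℕ → ℕ → ℕ → ℕ
  | 0, _, _ => 0
  | 1, a, b => a + b
  | 2, _, 0 => 0
  | _ + 3, _, 0 => 1
  | n + 2, a, b + 1 => hyp (n + 1) a (hyp (n + 2) a b)
termination_by n _ b => (n, b)

open Ordinal

/-- The head of the Cantor Normal Form of `β` (for `β ≠ 0`): `ω ^ β₁`. -/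
noncomputable def cnfHead (β : Ordinal) : Ordinal := ω ^ Ordinal.log ω β

/-- The tail of the Cantor Normal Form of `β`: `ω ^ β₂ + ⋯ + ω ^ β_k`. -/
noncomputable def cnfTail (β : Ordinal) : Ordinal := β - cnfHead β

theorem cnfHead_le {β : Ordinal} (hβ : β ≠ 0) : cnfHead β ≤ β :=
  Ordinal.opow_log_le_self ω hβ

theorem cnfTail_lt {β : Ordinal} (hβ : β ≠ 0) : cnfTail β < β := by
  refine (Ordinal.sub_le_self β _).lt_of_ne fun h => ?_
  have h1 : cnfHead β + β = β := by
    have h2 := Ordinal.add_sub_cancel_of_le (cnfHead_le hβ)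
    rwa [show β - cnfHead β = β from h] at h2
  have h2 : cnfHead β * ω ≤ β := Ordinal.add_eq_right_iff_mul_omega0_le.1 h1
  have h3 : β < ω ^ Order.succ (Ordinal.log ω β) :=
    Ordinal.lt_opow_succ_log_self Ordinal.one_lt_omega0 β
  rw [Ordinal.opow_succ] at h3
  exact absurd h2 (not_le.2 h3)

/-- Auxiliary step: given the previous operation `prev = ⟨-,-⟩_{n-1}` and the value `z`
at `β = 0`, produce `⟨α, -⟩_n` by transfinite recursion via the CNF of `β`. -/
noncomputable def ordOpAux (prev : Ordinal → Ordinal → Ordinal) (z : Ordinal)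
    (α : Ordinal) : Ordinal → Ordinal :=
  WellFounded.fix Ordinal.lt_wf fun β IH =>
    if hβ0 : β = 0 then z                      -- k = 0
    else if β = 1 then α                       -- k = 1, β = 1
    else if hp : cnfHead β = β then            -- k = 1, β > 1 (additive principal limit)
      ⨆ γ : Set.Iio β, IH γ.1 γ.2
    else                                       -- k ≥ 2
      prev (IH (cnfHead β) ((cnfHead_le hβ0).lt_of_ne hp))
           (IH (cnfTail β) (cnfTail_lt hβ0))

/-- The ordinal operations `⟨α, β⟩ₙ` of the paper (`n ≥ 1`; the value at `n = 0` is junk). -/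
noncomputable def ordOp : ℕ → Ordinal → Ordinal → Ordinal
  | 0 => fun _ _ => 0
  | 1 => fun α β => α + β
  | 2 => fun α => ordOpAux (ordOp 1) 0 α
  | (n + 3) => fun α => ordOpAux (ordOp (n + 2)) 1 α

/-! On finite ordinals the Cantor Normal Form of `b + 2` has head `1` and tail `b + 1`, so the
transfinite recursion defining `⟨a, -⟩ₙ₊₂` unfolds to `⟨a, b + 2⟩ₙ₊₂ = ⟨a, ⟨a, b + 1⟩ₙ₊₂⟩ₙ₊₁`,
which is the recursion of the hyperoperations. A lexicographic induction on `(n, b)` concludes. -/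

lemma hyp_add_two_succ (n a b : ℕ) : hyp (n + 2) a (b + 1) = hyp (n + 1) a (hyp (n + 2) a b) := by
  rw [hyp]

lemma hyp_add_two_one (n a : ℕ) : hyp (n + 2) a 1 = a := by
  induction n with
  | zero => simp [hyp]
  | succ n ih => rw [hyp_add_two_succ]; simpa [hyp] using ih

lemma cnfHead_of_lt_omega0 {β : Ordinal} (h : β < ω) : cnfHead β = 1 := by
  rw [cnfHead, log_eq_zero h, opow_zero]

lemma cnfTail_natCast_succ (b : ℕ) : cnfTail ((b + 1 : ℕ) : Ordinal) = b := by
  rw [cnfTail, cnfHead_of_lt_omega0 (natCast_lt_omega0 _), Nat.cast_succ, Nat.cast_add_one_comm,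
    add_sub_cancel]

section ordOpAux

universe u v

variable (prev : Ordinal.{u} → Ordinal.{u} → Ordinal.{u}) (z α : Ordinal.{u})

lemma ordOpAux_zero : ordOpAux prev z α (0 : Ordinal.{v}) = z := by
  rw [ordOpAux, WellFounded.fix_eq]; simp

lemma ordOpAux_one : ordOpAux prev z α (1 : Ordinal.{v}) = α := by
  rw [ordOpAux, WellFounded.fix_eq]; simp

lemma ordOpAux_natCast_add_two (b : ℕ) :
    ordOpAux prev z α ((b + 2 : ℕ) : Ordinal.{v}) =
      prev α (ordOpAux prev z α ((b + 1 : ℕ) : Ordinal.{v})) := by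
  have hlt : (1 : Ordinal.{v}) < (b + 2 : ℕ) := by exact_mod_cast (by omega : 1 < b + 2)
  have hhead : cnfHead ((b + 2 : ℕ) : Ordinal.{v}) = 1 :=
    cnfHead_of_lt_omega0 (natCast_lt_omega0 _)
  conv_lhs => rw [ordOpAux, WellFounded.fix_eq]
  rw [dif_neg (zero_lt_one.trans hlt).ne', if_neg hlt.ne', dif_neg (hhead ▸ hlt.ne)]
  show prev (ordOpAux prev z α (cnfHead _))
    (ordOpAux prev z α (cnfTail ((b + 1 + 1 : ℕ) : Ordinal.{v}))) = _
  rw [hhead, cnfTail_natCast_succ, ordOpAux_one]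

end ordOpAux

lemma ordOp_add_two (n a : ℕ) : ordOp (n + 2) = ordOpAux (ordOp (n + 1)) (hyp (n + 2) a 0) := by
  cases n <;> simp [ordOp, hyp]

/-- For every `n ≥ 1` and all natural numbers `a, b` (viewed as finite ordinals),
the ordinal operation `⟨a, b⟩ₙ` equals the hyperoperation `[a, b]ₙ`. -/
theorem ordOp_natCast (n : ℕ) (a b : ℕ) :
    ordOp n (a : Ordinal) (b : Ordinal) = (hyp n a b : Ordinal) :=
  match n, b with
  | 0, _ => by simp [ordOp, hyp]
  | 1, b => by simp [ordOp, hyp]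
  | n + 2, 0 => by rw [ordOp_add_two n a, Nat.cast_zero, ordOpAux_zero]
  | n + 2, 1 => by rw [ordOp_add_two n a, Nat.cast_one, ordOpAux_one, hyp_add_two_one]
  | n + 2, b + 2 => by
    rw [ordOp_add_two n a, ordOpAux_natCast_add_two, ← ordOp_add_two n a,
      ordOp_natCast (n + 2) a (b + 1), ordOp_natCast (n + 1) a, hyp_add_two_succ n a (b + 1)]
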